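/- arXiv:1301.6293 — 5 statements merged into one kernel-verified Lean document; each statement's English description precedes it below -/
import Mathlib

section
/- Given integers n, m ≥ 3, indices j_i, j_o, and reals t, r, R > 0 satisfying R·(e^{2πi j_o/m} + t·(e^{2πi(j_o+1)/m} − e^{2πi j_o/m})) = r·e^{2πi j_i/n}, it follows that R/r = cos(π(2 j_i m − (2 j_o + 1) n)/(n m)) / cos(π/m). -/
open Real Complex

/-!
Rotate the picture by `-φ`, where `φ = π(2 j_o + 1)/m` is the angle of the midpoint of edge `j_o`.
The edge then joins `e^{-iπ/m}` and `e^{iπ/m}`, so it lies on the vertical line `Re z = cos(π/m)`,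
while the vertex of the `n`-gon lands at `r e^{iθ}` with `θ = 2π j_i/n - φ`.
Comparing real parts gives `R cos(π/m) = r cos θ`.
-/

theorem re_chord_mul_exp_neg (φ β t : ℝ) :
    ((exp (↑(φ - β) * I) + t * (exp (↑(φ + β) * I) - exp (↑(φ - β) * I)))
      * exp (↑(-φ) * I)).re = Real.cos β := by
  have rotate : ∀ ψ : ℝ, exp (↑ψ * I) * exp (↑(-φ) * I) = exp (↑(ψ - φ) * I) := fun ψ => by
    rw [← Complex.exp_add]; push_cast; ring_nf
  rw [add_mul, mul_assoc, sub_mul, rotate, rotate, sub_sub_cancel_left, add_sub_cancel_left]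
  simp only [add_re, re_ofReal_mul, sub_re, exp_ofReal_mul_I_re, Real.cos_neg]
  ring

theorem re_ofReal_mul_exp_mul_exp_neg (r ψ φ : ℝ) :
    (r * exp (↑ψ * I) * exp (↑(-φ) * I)).re = r * Real.cos (ψ - φ) := by
  rw [mul_assoc, ← Complex.exp_add, ← add_mul, ← ofReal_add, re_ofReal_mul,
    exp_ofReal_mul_I_re, ← sub_eq_add_neg]

theorem cos_pi_div_pos {m : ℝ} (hm : 2 < m) : 0 < Real.cos (π / m) := by
  have hm0 : 0 < m := by linarith
  apply Real.cos_pos_of_mem_Ioo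
  constructor
  · linarith [div_pos Real.pi_pos hm0, Real.pi_pos]
  · rw [div_lt_div_iff₀ hm0 two_pos]
    nlinarith [Real.pi_pos]

theorem stmt_1_general (n m : ℕ) (hn : 3 ≤ n) (hm : 3 ≤ m) (ji jo : ℤ) (t r R : ℝ)
    (hr : 0 < r)
    (heq : (R : ℂ) * (Complex.exp (2 * Real.pi * Complex.I * jo / m)
        + (t : ℂ) * (Complex.exp (2 * Real.pi * Complex.I * (jo + 1) / m)
          - Complex.exp (2 * Real.pi * Complex.I * jo / m)))
      = (r : ℂ) * Complex.exp (2 * Real.pi * Complex.I * ji / n)) :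
    R / r = Real.cos (Real.pi * (2 * ji * m - (2 * jo + 1) * n) / (n * m))
        / Real.cos (Real.pi / m) := by
  have hm0 : (m : ℝ) ≠ 0 := by positivity
  have hn0 : (n : ℝ) ≠ 0 := by positivity
  set φ : ℝ := π * (2 * jo + 1) / m with hφ
  have start : 2 * π * I * jo / m = ↑(φ - π / m) * I := by
    rw [hφ]; push_cast; field_simp; ring
  have finish : 2 * π * I * (jo + 1) / m = ↑(φ + π / m) * I := by
    rw [hφ]; push_cast; field_simp; ring
  have vertex : 2 * π * I * ji / n = ↑(2 * π * ji / n) * I := by push_cast; ring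
  rw [start, finish, vertex] at heq
  have key := congrArg (fun z => (z * exp (↑(-φ) * I)).re) heq
  simp only [mul_assoc (R : ℂ), re_ofReal_mul, re_chord_mul_exp_neg] at key
  rw [re_ofReal_mul_exp_mul_exp_neg] at key
  have angle : 2 * π * ji / n - φ = π * (2 * ji * m - (2 * jo + 1) * n) / (n * m) := by
    rw [hφ]; field_simp
  have hcos := cos_pi_div_pos (m := m) (by exact_mod_cast hm)
  rw [div_eq_div_iff hr.ne' hcos.ne', ← angle]
  linarith

/-- If the point with parameter `t` on edge `j_o` of the regular `m`-gon with
circumradius `R` in standard position coincides with vertex `j_i` of the regular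
`n`-gon with circumradius `r` in standard position, then
`R/r = cos(π(2 j_i m − (2 j_o + 1) n)/(n m)) / cos(π/m)`. -/
theorem stmt_1 (n m : ℕ) (hn : 3 ≤ n) (hm : 3 ≤ m) (ji jo : ℤ) (t r R : ℝ)
    (ht0 : 0 ≤ t) (ht1 : t ≤ 1) (hr : 0 < r) (hR : 0 < R)
    (heq : (R : ℂ) * (Complex.exp (2 * Real.pi * Complex.I * jo / m)
        + (t : ℂ) * (Complex.exp (2 * Real.pi * Complex.I * (jo + 1) / m)
          - Complex.exp (2 * Real.pi * Complex.I * jo / m)))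
      = (r : ℂ) * Complex.exp (2 * Real.pi * Complex.I * ji / n)) :
    R / r = Real.cos (Real.pi * (2 * ji * m - (2 * jo + 1) * n) / (n * m))
        / Real.cos (Real.pi / m) :=
  stmt_1_general n m hn hm ji jo t r R hr heq
end

section
/- cos(π/15)/cos(π/5) = (3 − √5)/4 + √3 · √((5 − √5)/8). -/
open Real

theorem stmt_3 :
    Real.cos (Real.pi / 15) / Real.cos (Real.pi / 5)
      = (3 - Real.sqrt 5) / 4 + Real.sqrt 3 * Real.sqrt ((5 - Real.sqrt 5) / 8) := by
  have hpi := Real.pi_pos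
  have h5 : Real.sqrt 5 ^ 2 = 5 := Real.sq_sqrt (by norm_num)
  have h5lt : Real.sqrt 5 < 3 := by nlinarith [Real.sqrt_nonneg 5]
  have hc : Real.cos (Real.pi / 5) = (1 + Real.sqrt 5) / 4 := Real.cos_pi_div_five
  have hcpos : (0:ℝ) < Real.cos (Real.pi / 5) := by
    rw [hc]; positivity
  have hs : Real.sin (Real.pi / 5) = Real.sqrt ((5 - Real.sqrt 5) / 8) := by
    rw [Real.sin_eq_sqrt_one_sub_cos_sq (by positivity) (by linarith [Real.pi_pos]), hc]
    congr 1
    nlinarith [Real.sqrt_nonneg 5]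
  have h15 : Real.pi / 15 = 2 * (Real.pi / 5) - Real.pi / 3 := by ring
  rw [h15, Real.cos_sub, Real.cos_two_mul, Real.sin_two_mul, Real.cos_pi_div_three,
    Real.sin_pi_div_three, hc, hs]
  have hsq3 : Real.sqrt 3 ≥ 0 := Real.sqrt_nonneg 3
  have hsqq : Real.sqrt ((5 - Real.sqrt 5) / 8) ≥ 0 := Real.sqrt_nonneg _
  rw [hc] at hcpos
  rw [div_eq_iff (ne_of_gt hcpos)]
  linear_combination h5 / 8
end

section
/- For every positive integer s and real n > 0, 1/(n^{2s}·(n+1)^{2s}) = ∑_{t=1}^{2s} C(4s−t−1, 2s−1) · ((−1)^t/n^t + 1/(n+1)^t). -/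
noncomputable def Taux (m : ℕ) (z : ℝ) : ℝ :=
  ∑ k ∈ Finset.range m, ((m + k - 1).choose k : ℝ) * z ^ k

lemma Taux_rec (m : ℕ) (z : ℝ) :
    (1 - z) * Taux (m+1) z
      = Taux m z + (((2*m-1).choose m : ℕ) : ℝ) * z ^ m
        - (((2*m).choose m : ℕ) : ℝ) * z ^ (m+1) := by
  have hA : Taux (m+1) z = ∑ k ∈ Finset.range (m+1), ((m+k).choose k : ℝ) * z ^ k := by
    unfold Taux
    exact Finset.sum_congr rfl fun k _ => by congr 3; omega
  have hzA : z * ∑ k ∈ Finset.range (m+1), ((m+k).choose k : ℝ) * z ^ k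
      = (∑ k ∈ Finset.range m, ((m+k).choose k : ℝ) * z ^ (k+1))
        + (((2*m).choose m : ℕ) : ℝ) * z ^ (m+1) := by
    rw [Finset.mul_sum, Finset.sum_range_succ]
    congr 1
    · exact Finset.sum_congr rfl fun k _ => by ring
    · rw [show m + m = 2*m by ring]; ring
  have hA' : ∑ k ∈ Finset.range (m+1), ((m+k).choose k : ℝ) * z ^ k
      = (∑ k ∈ Finset.range m,
          (((m+k).choose k : ℝ) + ((m+k).choose (k+1) : ℝ)) * z ^ (k+1)) + 1 := by
    rw [Finset.sum_range_succ']
    have h0 : ((m+0).choose 0 : ℝ) * z ^ 0 = 1 := by simp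
    rw [h0]
    congr 1
    refine Finset.sum_congr rfl fun k _ => ?_
    rw [show m + (k+1) = (m+k)+1 by ring, Nat.choose_succ_succ]
    push_cast; ring
  have e1 : ∑ k ∈ Finset.range (m+1), ((m+k-1).choose k : ℝ) * z ^ k
      = Taux m z + (((2*m-1).choose m : ℕ) : ℝ) * z ^ m := by
    rw [Finset.sum_range_succ]
    unfold Taux
    rw [show m + m - 1 = 2*m - 1 from by omega]
  have e2 : ∑ k ∈ Finset.range (m+1), ((m+k-1).choose k : ℝ) * z ^ k
      = (∑ k ∈ Finset.range m, ((m+k).choose (k+1) : ℝ) * z ^ (k+1)) + 1 := by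
    rw [Finset.sum_range_succ']
    have h0 : ((m+0-1).choose 0 : ℝ) * z ^ 0 = 1 := by simp
    rw [h0]
    congr 1
  have hsplit : ∑ k ∈ Finset.range m,
        (((m+k).choose k : ℝ) + ((m+k).choose (k+1) : ℝ)) * z ^ (k+1)
      = (∑ k ∈ Finset.range m, ((m+k).choose k : ℝ) * z ^ (k+1))
        + ∑ k ∈ Finset.range m, ((m+k).choose (k+1) : ℝ) * z ^ (k+1) := by
    rw [← Finset.sum_add_distrib]
    exact Finset.sum_congr rfl fun k _ => by ring
  rw [hA, sub_mul, one_mul, hzA, hA', hsplit]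
  have := e1.symm.trans e2
  linarith [this]

lemma key (m : ℕ) (hm : 1 ≤ m) (x : ℝ) :
    (1-x)^m * Taux m x + x^m * Taux m (1-x) = 1 := by
  induction m with
  | zero => omega
  | succ m ih =>
    rcases Nat.eq_zero_or_pos m with rfl | hm'
    · simp [Taux]
    · have h1 := Taux_rec m x
      have h2 := Taux_rec m (1-x)
      rw [show (1 - (1-x)) = x from by ring] at h2
      have ihx := ih hm'
      obtain ⟨j, rfl⟩ : ∃ j, m = j + 1 := ⟨m - 1, by omega⟩
      have hc : (((2*(j+1)).choose (j+1) : ℕ) : ℝ)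
          = 2 * (((2*(j+1)-1).choose (j+1) : ℕ) : ℝ) := by
        have hn : (2*(j+1)).choose (j+1) = 2 * ((2*(j+1)-1).choose (j+1)) := by
          rw [show 2*(j+1) = (2*j+1)+1 from by omega, Nat.choose_succ_succ,
            show (2*j+1)+1-1 = 2*j+1 from by omega]
          have hsym := Nat.choose_symm_half j
          simp only [Nat.succ_eq_add_one] at *
          omega
        exact_mod_cast hn
      linear_combination (1-x)^(j+1) * h1 + x^(j+1) * h2 + ihx
        - x^(j+1)*(1-x)^(j+1) * hc

theorem stmt_9 (s : ℕ) (hs : 1 ≤ s) (n : ℝ) (hn : 0 < n) :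
    1 / (n ^ (2 * s) * (n + 1) ^ (2 * s))
      = ∑ t ∈ Finset.Icc 1 (2 * s),
          (Nat.choose (4 * s - t - 1) (2 * s - 1) : ℝ)
            * ((-1) ^ t / n ^ t + 1 / (n + 1) ^ t) := by
  set m := 2 * s with hm
  have hm1 : 1 ≤ m := by omega
  have hn0 : (n:ℝ) ≠ 0 := ne_of_gt hn
  have hn1 : (n+1) ≠ 0 := by positivity
  have hNm : n ^ m ≠ 0 := pow_ne_zero _ hn0
  have hN1m : (n+1) ^ m ≠ 0 := pow_ne_zero _ hn1
  have heven : Even m := ⟨s, by omega⟩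
  have hkey := key m hm1 (n+1)
  rw [show (1 - (n+1)) = -n from by ring, heven.neg_pow n] at hkey
  -- hkey : n^m * Taux m (n+1) + (n+1)^m * Taux m (-n) = 1
  have hre : ∑ t ∈ Finset.Icc 1 m, ((4*s - t - 1).choose (2*s-1) : ℝ)
        * ((-1)^t / n^t + 1/(n+1)^t)
      = ∑ k ∈ Finset.range m, ((m + k - 1).choose k : ℝ)
        * ((-1)^(m-k) / n^(m-k) + 1/(n+1)^(m-k)) := by
    refine Finset.sum_nbij' (fun t => m - t) (fun k => m - k) ?_ ?_ ?_ ?_ ?_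
    · intro t ht
      simp only [Finset.mem_Icc] at ht
      simp only [Finset.mem_range]
      omega
    · intro k hk
      simp only [Finset.mem_range] at hk
      simp only [Finset.mem_Icc]
      omega
    · intro t ht
      simp only [Finset.mem_Icc] at ht
      show m - (m - t) = t
      omega
    · intro k hk
      simp only [Finset.mem_range] at hk
      show m - (m - k) = k
      omega
    · intro t ht
      simp only [Finset.mem_Icc] at ht
      show _ = ((m + (m - t) - 1).choose (m - t) : ℝ)
        * ((-1)^(m-(m-t)) / n^(m-(m-t)) + 1/(n+1)^(m-(m-t)))
      have h1 : m - (m - t) = t := by omega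
      rw [h1]
      congr 2
      have h2 : m + (m - t) - 1 = 4*s - t - 1 := by omega
      rw [h2]
      have h3 : (4*s - t - 1).choose (m - t) = (4*s - t - 1).choose (2*s - 1) := by
        have h4 : (4*s-t-1) - (2*s-1) = m - t := by omega
        rw [← h4]
        exact Nat.choose_symm (by omega)
      rw [h3]
  rw [hre]
  have hterm : ∀ k ∈ Finset.range m,
      ((m + k - 1).choose k : ℝ) * ((-1)^(m-k) / n^(m-k) + 1/(n+1)^(m-k))
        = ((m + k - 1).choose k : ℝ) * (-n)^k / n^m
          + ((m + k - 1).choose k : ℝ) * (n+1)^k / (n+1)^m := by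
    intro k hk
    simp only [Finset.mem_range] at hk
    have h2 : ((-1:ℝ))^k * (-1)^k = 1 := by
      rw [← pow_add]
      have he : Even (k+k) := ⟨k, rfl⟩
      exact he.neg_one_pow
    have hsign : ((-1:ℝ))^(m-k) = (-1)^k := by
      have h : ((-1:ℝ))^(m-k) * (-1)^k = 1 := by
        rw [← pow_add, show m - k + k = m from by omega]
        exact heven.neg_one_pow
      calc ((-1:ℝ))^(m-k) = ((-1:ℝ))^(m-k) * ((-1)^k * (-1)^k) := by rw [h2, mul_one]
        _ = (((-1:ℝ))^(m-k) * (-1)^k) * (-1)^k := by ring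
        _ = (-1)^k := by rw [h, one_mul]
    rw [hsign]
    have hdn : n ^ m = n ^ (m-k) * n ^ k := by
      rw [← pow_add]; congr 1; omega
    have hdn1 : (n+1) ^ m = (n+1) ^ (m-k) * (n+1) ^ k := by
      rw [← pow_add]; congr 1; omega
    rw [hdn, hdn1, neg_pow]
    have hpk : n ^ k ≠ 0 := pow_ne_zero _ hn0
    have hpk1 : (n+1) ^ k ≠ 0 := pow_ne_zero _ hn1
    have hpmk : n ^ (m-k) ≠ 0 := pow_ne_zero _ hn0
    have hpmk1 : (n+1) ^ (m-k) ≠ 0 := pow_ne_zero _ hn1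
    field_simp
    ring
  rw [Finset.sum_congr rfl hterm, Finset.sum_add_distrib]
  have hs1 : ∑ k ∈ Finset.range m, ((m + k - 1).choose k : ℝ) * (-n)^k / n^m
      = Taux m (-n) / n^m := by
    rw [Taux, Finset.sum_div]
  have hs2 : ∑ k ∈ Finset.range m, ((m + k - 1).choose k : ℝ) * (n+1)^k / (n+1)^m
      = Taux m (n+1) / (n+1)^m := by
    rw [Taux, Finset.sum_div]
  rw [hs1, hs2, div_add_div _ _ hNm hN1m, div_eq_div_iff (mul_ne_zero hNm hN1m)
    (mul_ne_zero hNm hN1m)]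
  linear_combination (-(n^m * (n+1)^m)) * hkey
end

section
/- ∑_{k=1}^∞ 1/((2k)⁶(2k+1)⁶) = −462 + 21π² + 42·ζ(3) + 252·log 2 + 7π⁴/30 + π⁶/945 + (45/8)·ζ(5). -/
/-!
Write `x = 2k + 2`. The partial fraction decomposition of `1 / (x ^ 6 (x + 1) ^ 6)` splits the
series into the pairs `∑ (1 / x ^ j ± 1 / (x + 1) ^ j)` for `1 ≤ j ≤ 6`. For `j ≥ 2` the two
halves are the even and odd parts of `ζ(j) - 1 = ∑_{n ≥ 2} n ^ (-j)`, namely `ζ(j) / 2 ^ j` and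
`ζ(j) - 1 - ζ(j) / 2 ^ j`. For `j = 1` the pair is the odd part of the telescoping series
`∑ (1 / (n + 1) - 1 / (n + 2)) = 1`, whose even part is the alternating harmonic series `log 2`.
-/

open Real Filter Finset Topology

theorem HasSum.odd_of_even {α : Type*} [AddCommGroup α] [UniformSpace α] [IsUniformAddGroup α]
    [CompleteSpace α] [T2Space α] {f : ℕ → α} {a b : α} (hf : HasSum f a)
    (heven : HasSum (fun k ↦ f (2 * k)) b) : HasSum (fun k ↦ f (2 * k + 1)) (a - b) := by
  have hodd := (hf.summable.comp_injective (i := fun k ↦ 2 * k + 1)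
    fun m n h ↦ by simp only at h; omega).hasSum
  rw [hf.unique (heven.even_add_odd hodd), add_sub_cancel_left]
  exact hodd

theorem Antitone.hasSum_sub_succ {f : ℕ → ℝ} (hf : Antitone f) (h0 : Tendsto f atTop (𝓝 0)) :
    HasSum (fun n ↦ f n - f (n + 1)) (f 0) := by
  rw [hasSum_iff_tendsto_nat_of_nonneg fun n ↦ sub_nonneg.2 (hf n.le_succ)]
  simp_rw [Finset.sum_range_sub']
  simpa using tendsto_const_nhds.sub h0

theorem harmonic_two_mul_sub_harmonic (n : ℕ) :
    (harmonic (2 * n) : ℝ) - harmonic n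
      = ∑ k ∈ range n, (1 / (2 * (k : ℝ) + 1) - 1 / (2 * (k : ℝ) + 2)) := by
  induction n with
  | zero => simp
  | succ m ih =>
    rw [sum_range_succ, ← ih, show 2 * (m + 1) = 2 * m + 1 + 1 by ring,
      harmonic_succ, harmonic_succ, harmonic_succ]
    push_cast
    field_simp
    ring

theorem hasSum_alternating_harmonic :
    HasSum (fun k : ℕ ↦ 1 / (2 * (k : ℝ) + 1) - 1 / (2 * (k : ℝ) + 2)) (log 2) := by
  rw [hasSum_iff_tendsto_nat_of_nonneg fun k ↦ sub_nonneg.2 <|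
    one_div_le_one_div_of_le (by positivity) (by linarith)]
  -- `H (2n) - H n = (H (2n) - log (2n)) - (H n - log n) + log 2`, and both brackets tend to `γ`.
  have hγ := tendsto_harmonic_sub_log
  have hlim := ((hγ.comp (tendsto_id.const_mul_atTop' two_pos)).sub hγ).add_const (log 2)
  rw [sub_self, zero_add] at hlim
  refine hlim.congr' ?_
  filter_upwards [eventually_ne_atTop 0] with n hn
  simp only [Function.comp_apply, id_eq, ← harmonic_two_mul_sub_harmonic]
  push_cast
  rw [log_mul two_ne_zero (Nat.cast_ne_zero.2 hn)]
  ring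

theorem hasSum_one_sub_log_two :
    HasSum (fun k : ℕ ↦ 1 / (2 * ((k : ℝ) + 1)) - 1 / (2 * ((k : ℝ) + 1) + 1)) (1 - log 2) := by
  have htele : HasSum (fun n : ℕ ↦ 1 / ((n : ℝ) + 1) - 1 / ((n + 1 : ℕ) + 1)) 1 := by
    simpa using Antitone.hasSum_sub_succ (f := fun n : ℕ ↦ 1 / ((n : ℝ) + 1))
      (fun m n h ↦ one_div_le_one_div_of_le (by positivity) (by simpa))
      tendsto_one_div_add_atTop_nhds_zero_nat
  have heven : HasSum (fun k : ℕ ↦ 1 / (((2 * k : ℕ) : ℝ) + 1) - 1 / ((2 * k + 1 : ℕ) + 1))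
      (log 2) := by
    refine hasSum_alternating_harmonic.congr_fun fun k ↦ ?_
    push_cast
    ring
  refine (htele.odd_of_even heven).congr_fun fun k ↦ ?_
  push_cast
  ring

theorem hasSum_zeta_six : HasSum (fun n : ℕ ↦ (1 : ℝ) / (n : ℝ) ^ 6) (π ^ 6 / 945) := by
  convert hasSum_zeta_nat three_ne_zero using 1
  rw [show bernoulli (2 * 3) = 1 / 42 by decide +kernel]
  norm_num [Nat.factorial]
  ring

theorem HasSum.one_div_nat_add_one_pow {j : ℕ} (hj : j ≠ 0) {a : ℝ}
    (h : HasSum (fun n : ℕ ↦ 1 / (n : ℝ) ^ j) a) :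
    HasSum (fun n : ℕ ↦ 1 / ((n : ℝ) + 1) ^ j) a := by
  simpa [zero_pow hj] using (hasSum_nat_add_iff' 1).mpr h

theorem summable_one_div_nat_add_one_pow {j : ℕ} (hj : 1 < j) :
    Summable (fun n : ℕ ↦ 1 / ((n : ℝ) + 1) ^ j) :=
  ((summable_one_div_nat_pow.2 hj).hasSum.one_div_nat_add_one_pow (by omega)).summable

section ParityParts

variable {j : ℕ} {a : ℝ}

theorem HasSum.one_div_two_mul_pow (h : HasSum (fun n : ℕ ↦ 1 / ((n : ℝ) + 1) ^ j) a) :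
    HasSum (fun k : ℕ ↦ 1 / (2 * ((k : ℝ) + 1)) ^ j) (a / 2 ^ j) :=
  (h.div_const _).congr_fun fun k ↦ by rw [mul_pow, div_div, mul_comm]

theorem HasSum.one_div_two_mul_add_one_pow (h : HasSum (fun n : ℕ ↦ 1 / ((n : ℝ) + 1) ^ j) a) :
    HasSum (fun k : ℕ ↦ 1 / (2 * ((k : ℝ) + 1) + 1) ^ j) (a - 1 - a / 2 ^ j) := by
  have htail : HasSum (fun n : ℕ ↦ 1 / ((n : ℝ) + 2) ^ j) (a - 1) := by
    simpa [add_assoc, one_add_one_eq_two] using (hasSum_nat_add_iff' 1).mpr h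
  refine (htail.odd_of_even (h.one_div_two_mul_pow.congr_fun fun k ↦ ?_)).congr_fun fun k ↦ ?_
  all_goals push_cast; ring

theorem HasSum.one_div_two_mul_pow_add_mul (h : HasSum (fun n : ℕ ↦ 1 / ((n : ℝ) + 1) ^ j) a)
    (s : ℝ) :
    HasSum (fun k : ℕ ↦ 1 / (2 * ((k : ℝ) + 1)) ^ j + s * (1 / (2 * ((k : ℝ) + 1) + 1) ^ j))
      (a / 2 ^ j + s * (a - 1 - a / 2 ^ j)) :=
  h.one_div_two_mul_pow.add (h.one_div_two_mul_add_one_pow.mul_left s)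

end ParityParts

-- The coefficients of `1 / x ^ j` and `1 / (x + 1) ^ j` are `(-1) ^ j * C(11 - j, 5)` and
-- `C(11 - j, 5)`.
theorem one_div_pow_six_mul_add_one_pow_six {K : Type*} [Field K] {x : K} (hx : x ≠ 0)
    (hx₁ : x + 1 ≠ 0) :
    1 / (x ^ 6 * (x + 1) ^ 6)
      = -252 * (1 / x - 1 / (x + 1)) + 126 * (1 / x ^ 2 + 1 / (x + 1) ^ 2)
        - 56 * (1 / x ^ 3 - 1 / (x + 1) ^ 3) + 21 * (1 / x ^ 4 + 1 / (x + 1) ^ 4)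
        - 6 * (1 / x ^ 5 - 1 / (x + 1) ^ 5) + (1 / x ^ 6 + 1 / (x + 1) ^ 6) := by
  field_simp
  ring

theorem stmt_17 :
    ∑' k : ℕ, (1 : ℝ) / ((2 * ((k : ℝ) + 1)) ^ 6 * (2 * ((k : ℝ) + 1) + 1) ^ 6)
      = -462 + 21 * Real.pi ^ 2 + 42 * (∑' n : ℕ, (1 : ℝ) / ((n : ℝ) + 1) ^ 3)
        + 252 * Real.log 2 + 7 * Real.pi ^ 4 / 30 + Real.pi ^ 6 / 945
        + (45 / 8) * (∑' n : ℕ, (1 : ℝ) / ((n : ℝ) + 1) ^ 5) := by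
  have h2 := (hasSum_zeta_two.one_div_nat_add_one_pow two_ne_zero).one_div_two_mul_pow_add_mul 1
  have h3 := (summable_one_div_nat_add_one_pow (by norm_num : 1 < 3)).hasSum
    |>.one_div_two_mul_pow_add_mul (-1)
  have h4 := (hasSum_zeta_four.one_div_nat_add_one_pow four_ne_zero).one_div_two_mul_pow_add_mul 1
  have h5 := (summable_one_div_nat_add_one_pow (by norm_num : 1 < 5)).hasSum
    |>.one_div_two_mul_pow_add_mul (-1)
  have h6 := (hasSum_zeta_six.one_div_nat_add_one_pow (by norm_num)).one_div_two_mul_pow_add_mul 1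
  have H := ((((hasSum_one_sub_log_two.mul_left (-252)).add (h2.mul_left 126)).add
    (h3.mul_left (-56))).add (h4.mul_left 21)).add (h5.mul_left (-6)) |>.add h6
  rw [(H.congr_fun fun k ↦ ?_).tsum_eq]
  · ring
  · rw [one_div_pow_six_mul_add_one_pow_six (by positivity) (by positivity)]
    ring
end

section
/- For the concentric tight circumscription of a regular 4-gon (circumradius r, standard position) by a translated equilateral triangle with center shifted by a real amount z along the x-axis, the system of contact equations forces the circumradius R of the triangle to satisfy r/R = (3/4)(√3 − 1) and z/R = (5 − 3√3)/4. -/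
open Real

/-- Contact equations for an equilateral triangle (circumradius `R`, center shifted
by `z` along the x-axis) tightly circumscribing a square (circumradius `r`, standard
position) force `r/R = (3/4)(√3 − 1)` and `z/R = (5 − 3√3)/4`. -/
theorem stmt_19 (r R z t : ℝ) (hr : 0 < r) (hR : 0 < R)
    (h1 : -(z / R) / 2 + 1 / 4 = (r / R) / 2)
    (h2 : z / R + 1 - (3 / 2) * t = 0)
    (h3 : (Real.sqrt 3 / 2) * t = r / R) :
    r / R = (3 / 4) * (Real.sqrt 3 - 1) ∧ z / R = (5 - 3 * Real.sqrt 3) / 4 := by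
  have hs : Real.sqrt 3 ^ 2 = 3 := Real.sq_sqrt (by norm_num)
  have hv : r / R = (3 / 4) * (Real.sqrt 3 - 1) := by
    nlinarith [Real.sqrt_nonneg 3, sq_nonneg (Real.sqrt 3 - 1), sq_nonneg t]
  exact ⟨hv, by linarith⟩
end
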